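/- Let φ be a logically separable epistemic term in K_n and Q a set of propositional variables. Then the forgetting ∃Q.φ is logically equivalent to the conjunction of: (a) ∃Q.α for each α ∈ Prop(φ); (b) □_i(∃Q.β) for each agent i and each β ∈ Box_i(φ); and (c) ◇_i(∃Q.γ) for each agent i and each γ ∈ Diam_i(φ). -/

import Mathlib

/-!
Write `L'` for `L.map (fmap F)`. Each conjunct of `L` entails its image, which avoids `Q`, so
`ψ ⊨ conj L'`. For the converse, separability reduces every `Q`-free basic consequence of
`conj L` to a consequence of a single conjunct `c`, and a short case analysis of entailments
between basic formulas shows it is then already a consequence of `fmap F c`. So a model `(M, s)`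
of `conj L'` satisfies all `Q`-free basic consequences of `conj L`. This suffices to build a model
of `conj L` that agrees with `(M, s)` on the finitely many subformulas of `ψ`: a fresh root whose
valuation comes from a model of `conj L` with the propositional type of `s`, and whose
`i`-successors are models of the satisfiable formulas that entail the `□_i`-bodies of `L` and
the `□_i`-theory of `s`. As `ψ` avoids `Q` and holds in that model, it holds at `s`.
-/

universe u v

inductive Fm (A P : Type) : Type
  | tru : Fm A P
  | var : P → Fm A P
  | neg : Fm A P → Fm A P
  | and : Fm A P → Fm A P → Fm A P
  | box : A → Fm A P → Fm A P

namespace Fm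
variable {A P : Type}
def or (φ ψ : Fm A P) : Fm A P := neg ((neg φ).and (neg ψ))
def bot : Fm A P := neg tru
def dia (i : A) (φ : Fm A P) : Fm A P := neg (box i (neg φ))
end Fm

structure KM (A P : Type) where
  S : Type
  R : A → S → S → Prop
  V : S → P → Prop

variable {A P : Type}

def Sat (M : KM A P) : M.S → Fm A P → Prop
  | _, .tru => True
  | s, .var p => M.V s p
  | s, .neg φ => ¬ Sat M s φ
  | s, .and φ ψ => Sat M s φ ∧ Sat M s ψ
  | s, .box i φ => ∀ t, M.R i s t → Sat M t φ

def Satisfiable (φ : Fm A P) : Prop := ∃ (M : KM A P) (s : M.S), Sat M s φ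

def Entails (φ ψ : Fm A P) : Prop := ∀ (M : KM A P) (s : M.S), Sat M s φ → Sat M s ψ

def FEquiv (φ ψ : Fm A P) : Prop := Entails φ ψ ∧ Entails ψ φ

def IsProp : Fm A P → Prop
  | .tru => True
  | .var _ => True
  | .neg φ => IsProp φ
  | .and φ ψ => IsProp φ ∧ IsProp ψ
  | .box _ _ => False

def Basic (φ : Fm A P) : Prop :=
  IsProp φ ∨ (∃ i ψ, φ = Fm.box i ψ) ∨ (∃ i ψ, φ = Fm.dia i ψ)

def conj : List (Fm A P) → Fm A P
  | [] => Fm.tru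
  | φ :: L => φ.and (conj L)

def disj : List (Fm A P) → Fm A P
  | [] => Fm.bot
  | φ :: L => φ.or (disj L)

def EpTerm (L : List (Fm A P)) : Prop := ∀ c ∈ L, Basic c

def LogSep (L : List (Fm A P)) : Prop :=
  ∀ η : Fm A P, Basic η → Entails (conj L) η → ∃ α ∈ L, Entails α η

def fvars : Fm A P → Set P
  | .tru => ∅
  | .var p => {p}
  | .neg φ => fvars φ
  | .and φ ψ => fvars φ ∪ fvars ψ
  | .box _ φ => fvars φ

def fsize : Fm A P → ℕ
  | .tru => 1
  | .var _ => 1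
  | .neg φ => fsize φ + 1
  | .and φ ψ => fsize φ + fsize ψ + 1
  | .box _ φ => fsize φ + 1

def IsForget (Q : Finset P) (φ ψ : Fm A P) : Prop :=
  Entails φ ψ ∧ (∀ q ∈ Q, q ∉ fvars ψ) ∧
    ∀ η : Fm A P, (∀ q ∈ Q, q ∉ fvars η) → (Entails φ η ↔ Entails ψ η)

/-- Apply forgetting `F` inside modalities: a `□_i β` conjunct becomes `□_i (F β)`,
a `◇_i γ` conjunct becomes `◇_i (F γ)`, and a propositional conjunct `α` becomes `F α`. -/
def fmap (F : Fm A P → Fm A P) : Fm A P → Fm A P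
  | .neg (.box i (.neg γ)) => Fm.dia i (F γ)
  | .box i β => Fm.box i (F β)
  | α => F α

def Avoids (Q : Finset P) (φ : Fm A P) : Prop := ∀ q ∈ Q, q ∉ fvars φ

def Valid (φ : Fm A P) : Prop := ∀ (M : KM A P) (s : M.S), Sat M s φ

theorem Valid.entails {η : Fm A P} (h : Valid η) (φ : Fm A P) : Entails φ η :=
  fun M s _ => h M s

theorem Valid.box {θ : Fm A P} (h : Valid θ) (i : A) : Valid (Fm.box i θ) := fun M _ t _ => h M t

theorem sat_dia {M : KM A P} {s : M.S} {i : A} {χ : Fm A P} :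
    Sat M s (Fm.dia i χ) ↔ ∃ t, M.R i s t ∧ Sat M t χ := by
  simp [Fm.dia, Sat]

theorem sat_conj {M : KM A P} {s : M.S} {L : List (Fm A P)} :
    Sat M s (conj L) ↔ ∀ c ∈ L, Sat M s c := by
  induction L with
  | nil => simp [conj, Sat]
  | cons c L ih => simp [conj, Sat, ih]

theorem isProp_conj {L : List (Fm A P)} (h : ∀ c ∈ L, IsProp c) : IsProp (conj L) := by
  induction L with
  | nil => trivial
  | cons c L ih =>
    exact ⟨h c List.mem_cons_self, ih fun e he => h e (List.mem_cons_of_mem _ he)⟩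

theorem avoids_conj {Q : Finset P} {L : List (Fm A P)} (h : ∀ c ∈ L, Avoids Q c) :
    Avoids Q (conj L) := by
  induction L with
  | nil => intro q _ hq; exact hq
  | cons c L ih =>
    intro q hq hmem
    rcases hmem with hc | hL
    · exact h c List.mem_cons_self q hq hc
    · exact ih (fun e he => h e (List.mem_cons_of_mem _ he)) q hq hL

theorem Avoids.and {Q : Finset P} {φ χ : Fm A P} (hφ : Avoids Q φ) (hχ : Avoids Q χ) :
    Avoids Q (φ.and χ) := fun q hq hmem => hmem.elim (hφ q hq) (hχ q hq)

theorem entails_box_mono {β θ : Fm A P} (i : A) (h : Entails β θ) :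
    Entails (Fm.box i β) (Fm.box i θ) := fun M _ hs t ht => h M t (hs t ht)

theorem entails_dia_mono {γ θ : Fm A P} (i : A) (h : Entails γ θ) :
    Entails (Fm.dia i γ) (Fm.dia i θ) := fun M s hs => by
  obtain ⟨t, ht, hγ⟩ := sat_dia.mp hs
  exact sat_dia.mpr ⟨t, ht, h M t hγ⟩

theorem sat_iff_of_isProp {φ : Fm A P} (hφ : IsProp φ) {M N : KM A P} {s : M.S} {t : N.S}
    (hV : ∀ p, M.V s p ↔ N.V t p) : Sat M s φ ↔ Sat N t φ := by
  induction φ with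
  | tru => exact Iff.rfl
  | var p => exact hV p
  | neg φ ih => exact not_congr (ih hφ)
  | and φ χ ih₁ ih₂ => exact and_congr (ih₁ hφ.1) (ih₂ hφ.2)
  | box => exact hφ.elim

theorem IsForget.not_satisfiable {Q : Finset P} {φ ψ : Fm A P} (hψ : IsForget Q φ ψ)
    (hφ : ¬ Satisfiable φ) : ¬ Satisfiable ψ := by
  rintro ⟨M, s, hs⟩
  have hbot : Entails φ Fm.bot := fun M s h => (hφ ⟨M, s, h⟩).elim
  exact (hψ.2.2 Fm.bot (fun _ _ h => h)).mp hbot M s hs trivial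

def subformulas : Fm A P → List (Fm A P)
  | .tru => [.tru]
  | .var p => [.var p]
  | .neg φ => .neg φ :: subformulas φ
  | .and φ χ => .and φ χ :: (subformulas φ ++ subformulas χ)
  | .box i φ => .box i φ :: subformulas φ

theorem mem_subformulas_self (φ : Fm A P) : φ ∈ subformulas φ := by
  cases φ <;> simp [subformulas]

theorem fvars_subset_of_mem_subformulas {φ ψ : Fm A P} (h : φ ∈ subformulas ψ) :
    fvars φ ⊆ fvars ψ := by
  induction ψ with
  | tru | var => simp_all [subformulas]
  | neg ψ ih =>
    rcases List.mem_cons.mp h with rfl | h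
    exacts [subset_rfl, ih h]
  | and ψ χ ih₁ ih₂ =>
    rcases List.mem_cons.mp h with rfl | h
    · exact subset_rfl
    rcases List.mem_append.mp h with h | h
    exacts [(ih₁ h).trans Set.subset_union_left, (ih₂ h).trans Set.subset_union_right]
  | box i ψ ih =>
    rcases List.mem_cons.mp h with rfl | h
    exacts [subset_rfl, ih h]

theorem Avoids.of_mem_subformulas {Q : Finset P} {φ ψ : Fm A P} (hψ : Avoids Q ψ)
    (h : φ ∈ subformulas ψ) : Avoids Q φ :=
  fun q hq hφ => hψ q hq (fvars_subset_of_mem_subformulas h hφ)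

theorem sat_iff_of_subformulas_subset {Γ : List (Fm A P)} {M N : KM A P} {s : M.S} {r : N.S}
    (hvar : ∀ p, Fm.var p ∈ Γ → (N.V r p ↔ M.V s p))
    (hbox : ∀ i χ, χ ∈ Γ → (Sat N r (Fm.box i χ) ↔ Sat M s (Fm.box i χ)))
    {χ : Fm A P} (hχ : subformulas χ ⊆ Γ) : Sat N r χ ↔ Sat M s χ := by
  induction χ with
  | tru => exact Iff.rfl
  | var p => exact hvar p (hχ (mem_subformulas_self _))
  | neg φ ih => exact not_congr (ih (List.cons_subset.mp hχ).2)
  | and φ χ ih₁ ih₂ =>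
    obtain ⟨h₁, h₂⟩ := List.append_subset.mp (List.cons_subset.mp hχ).2
    exact and_congr (ih₁ h₁) (ih₂ h₂)
  | box i φ => exact hbox i φ ((List.cons_subset.mp hχ).2 (mem_subformulas_self φ))

namespace KM

def sigma {ι : Type} (W : ι → KM A P) : KM A P where
  S := Σ j, (W j).S
  R a x y := ∃ j u v, x = ⟨j, u⟩ ∧ y = ⟨j, v⟩ ∧ (W j).R a u v
  V x := (W x.1).V x.2

theorem sat_sigma {ι : Type} (W : ι → KM A P) (j : ι) (χ : Fm A P) (u : (W j).S) :
    Sat (sigma W) ⟨j, u⟩ χ ↔ Sat (W j) u χ := by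
  induction χ generalizing u with
  | tru | var => exact Iff.rfl
  | neg φ ih => exact not_congr (ih u)
  | and φ χ ih₁ ih₂ => exact and_congr (ih₁ u) (ih₂ u)
  | box a φ ih =>
    constructor
    · intro h v huv
      exact (ih v).mp (h ⟨j, v⟩ ⟨j, u, v, rfl, rfl, huv⟩)
    · rintro h _ ⟨j', u', v, hx, rfl, huv⟩
      cases hx
      exact (ih v).mpr (h v huv)

def addRoot (K : KM A P) (v : P → Prop) (E : A → K.S → Prop) : KM A P where
  S := Option K.S
  R a
    | none, some t => E a t
    | some t, some u => K.R a t u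
    | _, _ => False
  V
    | none => v
    | some t => K.V t

theorem sat_addRoot_some (K : KM A P) (v : P → Prop) (E : A → K.S → Prop) (χ : Fm A P)
    (t : K.S) : Sat (addRoot K v E) (some t) χ ↔ Sat K t χ := by
  induction χ generalizing t with
  | tru | var => exact Iff.rfl
  | neg φ ih => exact not_congr (ih t)
  | and φ χ ih₁ ih₂ => exact and_congr (ih₁ t) (ih₂ t)
  | box a φ ih =>
    constructor
    · exact fun h u htu => (ih u).mp (h (some u) htu)
    · rintro h (_ | u) htu
      exacts [htu.elim, (ih u).mpr (h u htu)]

theorem sat_addRoot_box {K : KM A P} {v : P → Prop} {E : A → K.S → Prop} {a : A}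
    {χ : Fm A P} :
    Sat (addRoot K v E) none (Fm.box a χ) ↔ ∀ t, E a t → Sat K t χ := by
  constructor
  · exact fun h t ht => (sat_addRoot_some K v E χ t).mp (h (some t) ht)
  · rintro h (_ | t) ht
    exacts [ht.elim, (sat_addRoot_some K v E χ t).mpr (h t ht)]

end KM

noncomputable def Satisfiable.model {φ : Fm A P} (h : Satisfiable φ) : KM A P := h.choose

noncomputable def Satisfiable.point {φ : Fm A P} (h : Satisfiable φ) : h.model.S :=
  h.choose_spec.choose

theorem Satisfiable.sat_point {φ : Fm A P} (h : Satisfiable φ) : Sat h.model h.point φ :=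
  h.choose_spec.choose_spec

/-- A fresh root with valuation `v`, whose `a`-successors are chosen pointed models of the
satisfiable formulas `φ` with `E a φ`. -/
noncomputable def fan (v : P → Prop) (E : A → Fm A P → Prop) : KM A P :=
  KM.addRoot (KM.sigma fun φ : {φ : Fm A P // Satisfiable φ} => φ.2.model) v
    fun a x => E a x.1 ∧ x.2 = x.1.2.point

section Fan

variable {v : P → Prop} {E : A → Fm A P → Prop} {a : A} {φ χ : Fm A P}

theorem sat_fan_box :
    Sat (fan v E) none (Fm.box a χ) ↔
      ∀ φ (h : Satisfiable φ), E a φ → Sat h.model h.point χ := by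
  unfold fan
  rw [KM.sat_addRoot_box]
  constructor
  · exact fun H φ h hE => (KM.sat_sigma _ (⟨φ, h⟩ : {φ // Satisfiable φ}) χ _).mp
      (H ⟨⟨φ, h⟩, h.point⟩ ⟨hE, rfl⟩)
  · rintro H ⟨⟨φ, h⟩, u⟩ ⟨hE, hu⟩
    rw [show u = h.point from hu]
    exact (KM.sat_sigma _ _ χ _).mpr (H φ h hE)

theorem sat_fan_box_of_entails (H : ∀ φ, E a φ → Entails φ χ) :
    Sat (fan v E) none (Fm.box a χ) :=
  sat_fan_box.mpr fun φ h hE => H φ hE _ _ h.sat_point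

theorem not_sat_fan_box (hE : E a φ) (hφ : Satisfiable φ) (hχ : Entails φ (Fm.neg χ)) :
    ¬ Sat (fan v E) none (Fm.box a χ) :=
  fun H => hχ _ _ hφ.sat_point (sat_fan_box.mp H φ hφ hE)

theorem sat_fan_dia (hE : E a φ) (hφ : Satisfiable φ) (hχ : Entails φ χ) :
    Sat (fan v E) none (Fm.dia a χ) :=
  not_sat_fan_box hE hφ fun M s hs hn => hn (hχ M s hs)

theorem not_sat_fan_dia (H : ∀ φ, E a φ → Entails φ (Fm.neg χ)) :
    ¬ Sat (fan v E) none (Fm.dia a χ) :=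
  fun h => h (sat_fan_box_of_entails H)

theorem sat_fan_iff_of_isProp {M : KM A P} {s : M.S} (hχ : IsProp χ) :
    Sat (fan (M.V s) E) none χ ↔ Sat M s χ :=
  sat_iff_of_isProp hχ fun _ => Iff.rfl

end Fan

section BasicEntailment

variable {i j : A} {β γ θ η : Fm A P}

theorem valid_of_box_entails_of_isProp (h : Entails (Fm.box i β) η) (hη : IsProp η) :
    Valid η := fun M s =>
  (sat_fan_iff_of_isProp (M := M) (s := s) (E := fun _ _ => False) hη).mp
    (h _ _ (sat_fan_box_of_entails fun _ hE => hE.elim))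

theorem entails_of_box_entails_box (h : Entails (Fm.box i β) (Fm.box i θ)) : Entails β θ := by
  intro M s hβ
  by_contra hθ
  refine not_sat_fan_box (v := fun _ => False) (E := fun _ φ => φ = β.and (Fm.neg θ)) rfl
    ⟨M, s, hβ, hθ⟩ (fun _ _ hs => hs.2) (h _ _ ?_)
  exact sat_fan_box_of_entails fun _ hφ => hφ ▸ fun _ _ hs => hs.1

theorem valid_of_box_entails_box_of_ne (hij : i ≠ j)
    (h : Entails (Fm.box i β) (Fm.box j θ)) : Valid θ := by
  intro M s
  by_contra hθ
  refine not_sat_fan_box (v := fun _ => False) (E := fun a φ => a = j ∧ φ = Fm.neg θ)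
    ⟨rfl, rfl⟩ ⟨M, s, hθ⟩ (fun _ _ hs => hs) (h _ _ ?_)
  exact sat_fan_box_of_entails fun _ hE => (hij hE.1).elim

theorem not_box_entails_dia : ¬ Entails (Fm.box i β) (Fm.dia j θ) := fun h =>
  not_sat_fan_dia (v := fun _ => False) (E := fun _ _ => False) (fun _ hE => hE.elim)
    (h _ _ (sat_fan_box_of_entails fun _ hE => hE.elim))

theorem valid_of_dia_entails_of_isProp (hγ : Satisfiable γ) (h : Entails (Fm.dia i γ) η)
    (hη : IsProp η) : Valid η := fun M s =>
  (sat_fan_iff_of_isProp (M := M) (s := s) (E := fun a φ => a = i ∧ φ = γ) hη).mp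
    (h _ _ (sat_fan_dia ⟨rfl, rfl⟩ hγ fun _ _ hs => hs))

theorem valid_of_dia_entails_box (hγ : Satisfiable γ) (h : Entails (Fm.dia i γ) (Fm.box j θ)) :
    Valid θ := by
  intro M s
  by_contra hθ
  refine not_sat_fan_box (v := fun _ => False)
    (E := fun a φ => a = i ∧ φ = γ ∨ a = j ∧ φ = Fm.neg θ) (Or.inr ⟨rfl, rfl⟩)
    ⟨M, s, hθ⟩ (fun _ _ hs => hs) (h _ _ ?_)
  exact sat_fan_dia (Or.inl ⟨rfl, rfl⟩) hγ fun _ _ hs => hs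

theorem eq_of_dia_entails_dia (hγ : Satisfiable γ) (h : Entails (Fm.dia i γ) (Fm.dia j θ)) :
    i = j := by
  by_contra hij
  refine not_sat_fan_dia (v := fun _ => False) (E := fun a φ => a = i ∧ φ = γ)
    (fun _ hE => (hij hE.1.symm).elim) (h _ _ ?_)
  exact sat_fan_dia ⟨rfl, rfl⟩ hγ fun _ _ hs => hs

theorem entails_of_dia_entails_dia (h : Entails (Fm.dia i γ) (Fm.dia i θ)) : Entails γ θ := by
  intro M s hγ
  by_contra hθ
  refine not_sat_fan_dia (v := fun _ => False) (E := fun _ φ => φ = γ.and (Fm.neg θ))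
    (fun _ hφ => hφ ▸ fun _ _ hs => hs.2) (h _ _ ?_)
  exact sat_fan_dia rfl ⟨M, s, hγ, hθ⟩ fun _ _ hs => hs.1

end BasicEntailment

section Fmap

variable {Q : Finset P} {F : Fm A P → Fm A P} {c : Fm A P}

theorem fmap_of_isProp (hc : IsProp c) : fmap F c = F c := by
  unfold fmap
  split
  · exact hc.elim
  · exact hc.elim
  · rfl

theorem entails_fmap (hF : ∀ χ, IsForget Q χ (F χ)) (hc : Basic c) : Entails c (fmap F c) := by
  rcases hc with hc | ⟨i, β, rfl⟩ | ⟨i, γ, rfl⟩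
  · rw [fmap_of_isProp hc]
    exact (hF c).1
  · exact entails_box_mono i (hF β).1
  · exact entails_dia_mono i (hF γ).1

theorem avoids_fmap (hF : ∀ χ, IsForget Q χ (F χ)) (hc : Basic c) : Avoids Q (fmap F c) := by
  rcases hc with hc | ⟨i, β, rfl⟩ | ⟨i, γ, rfl⟩
  · rw [fmap_of_isProp hc]
    exact (hF c).2.1
  · exact (hF β).2.1
  · exact (hF γ).2.1

theorem fmap_entails_of_entails (hF : ∀ χ, IsForget Q χ (F χ)) (hc : Basic c) {η : Fm A P}
    (hη : Basic η) (hQ : Avoids Q η) (h : Entails c η) : Entails (fmap F c) η := by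
  rcases hc with hc | ⟨i, β, rfl⟩ | ⟨i, γ, rfl⟩
  · rw [fmap_of_isProp hc]
    exact ((hF c).2.2 η hQ).mp h
  · rcases hη with hη | ⟨j, θ, rfl⟩ | ⟨j, θ, rfl⟩
    · exact (valid_of_box_entails_of_isProp h hη).entails _
    · by_cases hij : i = j
      · subst hij
        exact entails_box_mono i (((hF β).2.2 θ hQ).mp (entails_of_box_entails_box h))
      · exact ((valid_of_box_entails_box_of_ne hij h).box j).entails _
    · exact (not_box_entails_dia h).elim
  · by_cases hγ : Satisfiable γ
    · rcases hη with hη | ⟨j, θ, rfl⟩ | ⟨j, θ, rfl⟩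
      · exact (valid_of_dia_entails_of_isProp hγ h hη).entails _
      · exact ((valid_of_dia_entails_box hγ h).box j).entails _
      · obtain rfl := eq_of_dia_entails_dia hγ h
        exact entails_dia_mono i (((hF γ).2.2 θ hQ).mp (entails_of_dia_entails_dia h))
    · intro M s hs
      obtain ⟨t, -, ht⟩ := sat_dia.mp hs
      exact ((hF γ).not_satisfiable hγ ⟨M, t, ht⟩).elim

end Fmap

def SatBasicConsequences (Q : Finset P) (L : List (Fm A P)) (M : KM A P) (s : M.S) : Prop :=
  ∀ η, Basic η → Avoids Q η → Entails (conj L) η → Sat M s η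

open Classical in
noncomputable def boxBodies (i : A) (L : List (Fm A P)) : List (Fm A P) :=
  L.filterMap fun
    | .box j β => if j = i then some β else none
    | _ => none

theorem mem_boxBodies {i : A} {L : List (Fm A P)} {β : Fm A P} :
    β ∈ boxBodies i L ↔ Fm.box i β ∈ L := by
  simp only [boxBodies, List.mem_filterMap]
  constructor
  · rintro ⟨c, hc, hcβ⟩
    cases c with
    | box j β' =>
      simp only at hcβ
      split_ifs at hcβ with hj
      cases hcβ
      exact hj ▸ hc
    | _ => cases hcβ
  · exact fun h => ⟨_, h, if_pos rfl⟩

theorem sat_boxBodies_of_sat_conj {i : A} {L : List (Fm A P)} {K : KM A P} {k t : K.S}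
    (hK : Sat K k (conj L)) (ht : K.R i k t) : Sat K t (conj (boxBodies i L)) :=
  sat_conj.mpr fun _ hβ => sat_conj.mp hK _ (mem_boxBodies.mp hβ) t ht

section Theories

variable (M : KM A P) (s : M.S) (Γ : List (Fm A P))

open Classical in
noncomputable def boxTheory (i : A) : Fm A P :=
  conj (Γ.filter fun χ => Sat M s (Fm.box i χ))

open Classical in
noncomputable def propTheory : Fm A P :=
  conj ((Γ.filter fun φ => IsProp φ).map fun φ => if Sat M s φ then φ else Fm.neg φ)

variable {M s Γ} {K : KM A P} {k : K.S}

theorem sat_boxTheory {i : A} :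
    Sat K k (boxTheory M s Γ i) ↔ ∀ χ ∈ Γ, Sat M s (Fm.box i χ) → Sat K k χ := by
  simp [boxTheory, sat_conj, List.mem_filter]

theorem avoids_boxTheory {Q : Finset P} (hΓ : ∀ φ ∈ Γ, Avoids Q φ) (i : A) :
    Avoids Q (boxTheory M s Γ i) :=
  avoids_conj fun φ hφ => hΓ φ (List.mem_of_mem_filter hφ)

theorem sat_propTheory :
    Sat K k (propTheory M s Γ) ↔ ∀ φ ∈ Γ, IsProp φ → (Sat K k φ ↔ Sat M s φ) := by
  simp only [propTheory, sat_conj, List.forall_mem_map, List.mem_filter, decide_eq_true_eq,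
    and_imp]
  refine forall₂_congr fun φ _ => imp_congr_right fun _ => ?_
  split_ifs with hφ <;> simp [Sat, hφ]

theorem isProp_propTheory : IsProp (propTheory M s Γ) := by
  refine isProp_conj (List.forall_mem_map.mpr fun φ hφ => ?_)
  have hφ : IsProp φ := by simpa using (List.mem_filter.mp hφ).2
  split_ifs
  exacts [hφ, hφ]

theorem avoids_propTheory {Q : Finset P} (hΓ : ∀ φ ∈ Γ, Avoids Q φ) :
    Avoids Q (propTheory M s Γ) := by
  refine avoids_conj (List.forall_mem_map.mpr fun φ hφ => ?_)
  have hφ : Avoids Q φ := hΓ φ (List.mem_of_mem_filter hφ)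
  split_ifs
  exacts [hφ, hφ]

end Theories

namespace SatBasicConsequences

variable {Q : Finset P} {L : List (Fm A P)} {M : KM A P} {s : M.S}

theorem satisfiable_conj_and (h : SatBasicConsequences Q L M s) {π : Fm A P} (hπ : IsProp π)
    (hQ : Avoids Q π) (hs : Sat M s π) : Satisfiable ((conj L).and π) := by
  by_contra hun
  exact h (Fm.neg π) (Or.inl hπ) hQ (fun K k hK hπk => hun ⟨K, k, hK, hπk⟩) hs

theorem satisfiable_boxBodies_and (h : SatBasicConsequences Q L M s) {i : A} {θ : Fm A P}
    (hθ : Avoids Q θ) (hs : Sat M s (Fm.dia i θ)) :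
    Satisfiable ((conj (boxBodies i L)).and θ) := by
  by_contra hun
  exact hs (h (Fm.box i (Fm.neg θ)) (Or.inr (Or.inl ⟨i, _, rfl⟩)) hθ
    fun K k hK t ht hθt => hun ⟨K, t, sat_boxBodies_of_sat_conj hK ht, hθt⟩)

theorem satisfiable_boxBodies_and_and (h : SatBasicConsequences Q L M s) {i : A}
    {γ θ : Fm A P} (hγ : Fm.dia i γ ∈ L) (hθ : Avoids Q θ) (hs : Sat M s (Fm.box i θ)) :
    Satisfiable ((conj (boxBodies i L)).and (γ.and θ)) := by
  by_contra hun
  have hent : Entails (conj L) (Fm.dia i (Fm.neg θ)) := by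
    intro K k hK
    obtain ⟨t, ht, hγt⟩ := sat_dia.mp (sat_conj.mp hK _ hγ)
    exact sat_dia.mpr
      ⟨t, ht, fun hθt => hun ⟨K, t, sat_boxBodies_of_sat_conj hK ht, hγt, hθt⟩⟩
  obtain ⟨t, ht, hθt⟩ :=
    sat_dia.mp (h (Fm.dia i (Fm.neg θ)) (Or.inr (Or.inr ⟨i, _, rfl⟩)) hθ hent)
  exact hθt (hs t ht)

theorem exists_sat_conj_agree (h : SatBasicConsequences Q L M s) (hL : EpTerm L)
    {Γ : List (Fm A P)} (hΓ : ∀ φ ∈ Γ, Avoids Q φ) :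
    ∃ (N : KM A P) (r : N.S), Sat N r (conj L) ∧
      ∀ χ, subformulas χ ⊆ Γ → (Sat N r χ ↔ Sat M s χ) := by
  obtain ⟨K, k, hK, hπ⟩ := h.satisfiable_conj_and isProp_propTheory (avoids_propTheory hΓ)
    (sat_propTheory.mpr fun _ _ _ => Iff.rfl)
  set T := boxTheory M s Γ
  have hT : ∀ i, Sat M s (Fm.box i (T i)) := fun i t ht =>
    sat_boxTheory.mpr fun _ _ hχ => hχ t ht
  refine ⟨fan (K.V k) fun i φ => Entails φ ((conj (boxBodies i L)).and (T i)), none,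
    sat_conj.mpr fun c hc => ?_, fun χ hχ => sat_iff_of_subformulas_subset ?_ ?_ hχ⟩
  · rcases hL c hc with hc' | ⟨i, β, rfl⟩ | ⟨i, γ, rfl⟩
    · exact (sat_fan_iff_of_isProp hc').mpr (sat_conj.mp hK c hc)
    · exact sat_fan_box_of_entails fun φ hφ K' k' hk =>
        sat_conj.mp (hφ K' k' hk).1 β (mem_boxBodies.mpr hc)
    · exact sat_fan_dia (φ := (conj (boxBodies i L)).and (γ.and (T i)))
        (fun _ _ hk => ⟨hk.1, hk.2.2⟩)
        (h.satisfiable_boxBodies_and_and hc (avoids_boxTheory hΓ i) (hT i)) fun _ _ hk => hk.2.1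
  · exact fun p hp => sat_propTheory.mp hπ _ hp trivial
  · intro i χ hχ
    constructor
    · intro hN
      by_contra hn
      obtain ⟨t, ht, hχt⟩ : ∃ t, M.R i s t ∧ ¬ Sat M t χ := by simpa [Sat] using hn
      have hsθ : Sat M s (Fm.dia i ((T i).and (Fm.neg χ))) :=
        sat_dia.mpr ⟨t, ht, hT i t ht, hχt⟩
      exact not_sat_fan_box (φ := (conj (boxBodies i L)).and ((T i).and (Fm.neg χ)))
        (fun _ _ hk => ⟨hk.1, hk.2.1⟩)
        (h.satisfiable_boxBodies_and ((avoids_boxTheory hΓ i).and (hΓ χ hχ)) hsθ)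
        (fun _ _ hk => hk.2.2) hN
    · exact fun hs => sat_fan_box_of_entails fun φ hφ K' k' hk =>
        sat_boxTheory.mp (hφ K' k' hk).2 χ hχ hs

theorem sat_of_entails (h : SatBasicConsequences Q L M s) (hL : EpTerm L) {η : Fm A P}
    (hη : Avoids Q η) (hent : Entails (conj L) η) : Sat M s η := by
  obtain ⟨N, r, hN, hagree⟩ :=
    h.exists_sat_conj_agree hL fun _ hφ => hη.of_mem_subformulas hφ
  exact (hagree η (List.Subset.refl _)).mp (hent N r hN)

end SatBasicConsequences

section Forgetting

variable {L : List (Fm A P)} {Q : Finset P} {F : Fm A P → Fm A P}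

theorem satBasicConsequences_of_sat_conj_fmap (hterm : EpTerm L) (hsep : LogSep L)
    (hF : ∀ χ, IsForget Q χ (F χ)) {M : KM A P} {s : M.S}
    (hs : Sat M s (conj (L.map (fmap F)))) : SatBasicConsequences Q L M s := by
  intro η hη hQ hent
  obtain ⟨c, hc, hcη⟩ := hsep η hη hent
  exact fmap_entails_of_entails hF (hterm c hc) hη hQ hcη M s
    (sat_conj.mp hs _ (List.mem_map_of_mem hc))

theorem entails_conj_map_fmap (hterm : EpTerm L) (hF : ∀ χ, IsForget Q χ (F χ)) :
    Entails (conj L) (conj (L.map (fmap F))) := fun M s hs =>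
  sat_conj.mpr (List.forall_mem_map.mpr fun c hc =>
    entails_fmap hF (hterm c hc) M s (sat_conj.mp hs c hc))

theorem avoids_conj_map_fmap (hterm : EpTerm L) (hF : ∀ χ, IsForget Q χ (F χ)) :
    Avoids Q (conj (L.map (fmap F))) :=
  avoids_conj (List.forall_mem_map.mpr fun c hc => avoids_fmap hF (hterm c hc))

end Forgetting

theorem forgetting_separable_term_modular
    (L : List (Fm A P)) (hterm : EpTerm L) (hsep : LogSep L) (Q : Finset P)
    (F : Fm A P → Fm A P) (hF : ∀ χ : Fm A P, IsForget Q χ (F χ))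
    (ψ : Fm A P) (hψ : IsForget Q (conj L) ψ) :
    FEquiv ψ (conj (L.map (fmap F))) := by
  obtain ⟨hψL, hψQ, hψ⟩ := hψ
  refine ⟨(hψ _ (avoids_conj_map_fmap hterm hF)).mp (entails_conj_map_fmap hterm hF),
    fun M s hs => ?_⟩
  exact (satBasicConsequences_of_sat_conj_fmap hterm hsep hF hs).sat_of_entails hterm hψQ hψL
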